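/- Preservation of non-reachability under external calls: suppose the unknown-call semantics transforms heap h into h' such that dom(h) ⊆ dom(h'), every l ∈ dom(h) not reachable from ρ(y) satisfies h(l) = h'(l), and every l ∈ dom(h) not reachable from ρ(y) in h is only reachable in h' from locations l' ∈ dom(h) that are themselves not reachable from ρ(y) in h. Then for any location l₀ with Reach(h, l₀) ∩ (Reach(h, ρ(y)) ∪ (dom(h') \ dom(h))) = ∅, we have Reach(h', l₀) = Reach(h, l₀). -/
import Mathlib


namespace SecureClones

abbrev Var := ℕ
abbrev Field := ℕ
abbrev Loc := ℕ
abbrev PolId := ℕ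
abbrev Node := ℕ

/-- Values: locations or null. -/
inductive Val where
  | loc : Loc → Val
  | null : Val
deriving DecidableEq

abbrev Obj := Field → Val
abbrev Heap := Loc → Option Obj
abbrev Env := Var → Val

/-- An access path: a root variable followed by a sequence of fields. -/
structure Path where
  root : Var
  fields : List Field
deriving DecidableEq

/-- Evaluation of a sequence of field dereferences from a value. -/
def evalFields (h : Heap) : Val → List Field → Option Val
  | v, [] => some v
  | Val.loc l, f :: fs =>
      match h l with
      | some o => evalFields h (o f) fs
      | none => none
  | Val.null, _ :: _ => none

/-- Concrete path evaluation ⟨ρ,h⟩π ⇓ v. -/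
def EvalPath (ρ : Env) (h : Heap) (π : Path) (v : Val) : Prop :=
  evalFields h (ρ π.root) π.fields = some v

/-- Reachability in a heap: `Reach h v w` iff `w` is reachable from `v`
by a (possibly empty) sequence of field dereferences. -/
inductive Reach (h : Heap) : Val → Val → Prop
  | refl (v) : Reach h v v
  | step {v : Val} {l : Loc} {o : Obj} (f : Field) :
      Reach h v (Val.loc l) → h l = some o → Reach h v (o f)

/-- A copy policy: a set of (policy identifier, deep field) pairs. -/
abbrev Pol := Set (PolId × Field)

/-- A field sequence follows only deep fields of a policy (w.r.t. policy map `Pm`). -/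
inductive FieldsSat (Pm : PolId → Pol) : Pol → List Field → Prop
  | nil (τ) : FieldsSat Pm τ []
  | cons {τ : Pol} {fs : List Field} (X : PolId) (f : Field) :
      (X, f) ∈ τ → FieldsSat Pm (Pm X) fs → FieldsSat Pm τ (f :: fs)

/-- ⊢ π : τ : the access path follows only deep fields of τ. -/
def PathSat (Pm : PolId → Pol) (π : Path) (τ : Pol) : Prop :=
  FieldsSat Pm τ π.fields

/-- Policy semantics ρ,h,x ⊨ τ. -/
def PolSem (Pm : PolId → Pol) (ρ : Env) (h : Heap) (x : Var) (τ : Pol) : Prop :=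
  ∀ (π π' : Path) (l l' : Loc),
    π.root = x → π'.root ≠ x →
    PathSat Pm π τ →
    EvalPath ρ h π (Val.loc l) → EvalPath ρ h π' (Val.loc l') →
    l ≠ l'

/-- Base types of the type-and-effect system. -/
inductive BaseType where
  | node : Node → BaseType
  | bot
  | topOut
  | top
deriving DecidableEq

abbrev Graph := Node → Option (Field → BaseType)

/-- A type (Γ,Δ,Θ). -/
structure Ty where
  Γ : Var → BaseType
  Δ : Graph
  Θ : Set Node

/-- Abstract evaluation of a field sequence from a base type, with ⊤, ⊤out as sinks. -/
def aevalFields (Δ : Graph) : BaseType → List Field → Option BaseType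
  | t, [] => some t
  | BaseType.node n, f :: fs =>
      match Δ n with
      | some e => aevalFields Δ (e f) fs
      | none => none
  | BaseType.top, _ :: _ => some BaseType.top
  | BaseType.topOut, _ :: _ => some BaseType.topOut
  | BaseType.bot, _ :: _ => none

/-- Abstract path evaluation [Γ,Δ]π ⇓ t. -/
def AEval (Γ : Var → BaseType) (Δ : Graph) (π : Path) (t : BaseType) : Prop :=
  aevalFields Δ (Γ π.root) π.fields = some t

/-- Auxiliary type interpretation [[v : t]]. -/
inductive AuxInterp (ρ : Env) (h : Heap) (A : Set Loc) (Γ : Var → BaseType) (Δ : Graph) :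
    Val → BaseType → Prop
  | null (t) : AuxInterp ρ h A Γ Δ Val.null t
  | top (v) : AuxInterp ρ h A Γ Δ v BaseType.top
  | topOut (l : Loc) :
      (∀ l' : Loc, Reach h (Val.loc l) (Val.loc l') → l' ∉ A) →
      AuxInterp ρ h A Γ Δ (Val.loc l) BaseType.topOut
  | node (l : Loc) (n : Node) :
      l ∈ A → (Δ n).isSome →
      (∀ π, EvalPath ρ h π (Val.loc l) → AEval Γ Δ π (BaseType.node n)) →
      AuxInterp ρ h A Γ Δ (Val.loc l) (BaseType.node n)

/-- Main type interpretation ρ,h,A ⊨ (Γ,Δ,Θ). -/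
structure Interp (ρ : Env) (h : Heap) (A : Set Loc) (T : Ty) : Prop where
  paths : ∀ (π : Path) (t : BaseType) (v : Val),
    AEval T.Γ T.Δ π t → EvalPath ρ h π v → AuxInterp ρ h A T.Γ T.Δ v t
  strong : ∀ n ∈ T.Θ, ∀ (π π' : Path) (l l' : Loc),
    AEval T.Γ T.Δ π (BaseType.node n) → AEval T.Γ T.Δ π' (BaseType.node n) →
    EvalPath ρ h π (Val.loc l) → EvalPath ρ h π' (Val.loc l') → l = l'

/-- Value sub-typing t ≤_σ t' (σ : Node → Option Node, none standing for ⊤). -/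
inductive VSub (σ : Node → Option Node) : BaseType → BaseType → Prop
  | bot (t) : VSub σ BaseType.bot t
  | top {t : BaseType} : (∀ n, t ≠ BaseType.node n) → VSub σ t BaseType.top
  | topOut : VSub σ BaseType.topOut BaseType.topOut
  | node {n n' : Node} : σ n = some n' → VSub σ (BaseType.node n) (BaseType.node n')
  | nodeTop {n : Node} : σ n = none → VSub σ (BaseType.node n) BaseType.top

/-- T₁ ⊑ T₂ via the fusion map σ. -/
structure SubtypeVia (T₁ T₂ : Ty) (σ : Node → Option Node) : Prop where
  st1 : ∀ n n', (T₁.Δ n).isSome → σ n = some n' → (T₂.Δ n').isSome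
  st2 : ∀ (t₁ : BaseType) (π : Path), AEval T₁.Γ T₁.Δ π t₁ →
      ∃ t₂, VSub σ t₁ t₂ ∧ AEval T₂.Γ T₂.Δ π t₂
  st3 : ∀ n₂ ∈ T₂.Θ, ∃ n₁ ∈ T₁.Θ,
      ∀ n, ((T₁.Δ n).isSome ∧ σ n = some n₂) ↔ n = n₁

/-- The sub-typing relation T₁ ⊑ T₂. -/
def TySub (T₁ T₂ : Ty) : Prop := ∃ σ, SubtypeVia T₁ T₂ σ

-- Successor base type of a policy node for field f: the node of the policy
-- governing f if f is deep, and ⊤ otherwise.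
open Classical in
noncomputable def polEdge (τ : Pol) (f : Field) : BaseType :=
  if h : ∃ X, (X, f) ∈ τ then BaseType.node (h.choose + 1) else BaseType.top

/-- The graph part of Φ(τ): node 0 is the unfolded root n_τ, node X+1 is the
node n'_X of policy identifier X. -/
noncomputable def PhiGraph (Pm : PolId → Pol) (τ : Pol) : Graph :=
  fun n =>
    match n with
    | 0 => some (polEdge τ)
    | m + 1 => some (polEdge (Pm m))

/-- The root node n_τ of Φ(τ). -/
def PhiRoot : Node := 0

/-- Heap update h[(l,f) ↦ v]. -/
def hupd (h : Heap) (l : Loc) (f : Field) (v : Val) : Heap :=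
  fun l' => if l' = l then (h l).map (fun o => Function.update o f v) else h l'

/-- Graph update Δ[(n,f) ↦ t]. -/
def gupd (Δ : Graph) (n : Node) (f : Field) (t : BaseType) : Graph :=
  fun m => if m = n then (Δ n).map (fun e => Function.update e f t) else Δ m


/-- Preservation of non-reachability under external (unknown) calls. -/
theorem frame_unknown_call (ρ : Env) (y : Var) (h h' : Heap)
    (hdom : ∀ l : Loc, (h l).isSome → (h' l).isSome)
    (hframe : ∀ l : Loc, (h l).isSome → ¬ Reach h (ρ y) (Val.loc l) → h l = h' l)
    (hnoleak : ∀ l : Loc, (h l).isSome → ¬ Reach h (ρ y) (Val.loc l) →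
      ∀ l' : Loc, (h' l').isSome → Reach h' (Val.loc l') (Val.loc l) →
        (h l').isSome ∧ ¬ Reach h (ρ y) (Val.loc l'))
    (l₀ : Loc)
    (hsep : ∀ l : Loc, Reach h (Val.loc l₀) (Val.loc l) →
      ¬ Reach h (ρ y) (Val.loc l) ∧ ¬ ((h' l).isSome ∧ h l = none)) :
    ∀ w : Val, Reach h' (Val.loc l₀) w ↔ Reach h (Val.loc l₀) w := by
  intro w
  constructor
  · intro hr
    induction hr with
    | refl => exact Reach.refl _
    | @step l o f hv ho ih =>
      have hl := hsep l ih
      have hsome : (h l).isSome := by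
        cases hh : h l with
        | none => exact absurd ⟨by simp [ho], hh⟩ hl.2
        | some _ => simp [hh]
      have heq := hframe l hsome hl.1
      exact Reach.step f ih (heq.trans ho)
  · intro hr
    induction hr with
    | refl => exact Reach.refl _
    | @step l o f hv ho ih =>
      have hl := hsep l hv
      have hsome : (h l).isSome := by simp [ho]
      have heq := hframe l hsome hl.1
      exact Reach.step f ih (heq.symm.trans ho)

end SecureClones
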